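/- (Almost-highway traces are not sub-dynamics of one another) Let k > 1 and let i, j be integers with 0 < i < 2k, 0 < j < 2k−1 and i ≠ j. Then the 4-letter word (j+1)(j−1)(j)(0) (letters in ℤ/(2k+1)ℤ) occurs as a consecutive factor of the word t_{k,j}, but does not occur as a consecutive factor of the word t_{k,i}·t_{k,i}. -/

import Mathlib

/-- The word `⟨a.b.c.d⟩` over the alphabet `ℤ/(2k+1)ℤ`: the concatenation, for
`t = 0, 1, …, 2k−a−1`, of the 4-letter blocks `(a+t)(b+t)(c+t)(d+t)`.
It has length `4(2k−a)` and is empty when `a = 2k`. -/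
def cyc (k a b c d : ℕ) : List (ZMod (2 * k + 1)) :=
  (List.range (2 * k - a)).flatMap fun t =>
    [((a + t : ℕ) : ZMod (2 * k + 1)), ((b + t : ℕ) : ZMod (2 * k + 1)),
     ((c + t : ℕ) : ZMod (2 * k + 1)), ((d + t : ℕ) : ZMod (2 * k + 1))]

/-- The trace word
`t_{k,i} = ⟨0.0.0.0⟩·(2k)·⟨i.0.0.0⟩·(2k)·⟨(i+1).(i−1).i.0⟩·(2k)(2k)(2k−i)(2k)`
of the `L^{2k}R` ant along one almost-highway segment (length `24k − 8i + 2`). -/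
def tword (k i : ℕ) : List (ZMod (2 * k + 1)) :=
  cyc k 0 0 0 0 ++ [((2 * k : ℕ) : ZMod (2 * k + 1))] ++ cyc k i 0 0 0
    ++ [((2 * k : ℕ) : ZMod (2 * k + 1))] ++ cyc k (i + 1) (i - 1) i 0
    ++ [((2 * k : ℕ) : ZMod (2 * k + 1)), ((2 * k : ℕ) : ZMod (2 * k + 1)),
        ((2 * k - i : ℕ) : ZMod (2 * k + 1)), ((2 * k : ℕ) : ZMod (2 * k + 1))]

/-!
The word `(j+1)(j−1)(j)(0)` is the first block of `⟨(j+1).(j−1).j.0⟩`, so it is a factor of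
`t_{k,j}`. For the converse, `t_{k,i}` is read letter by letter through an explicit position
formula with values in `ℕ`. A letter `0` preceded by a nonzero letter occurs only right after
the first separator, inside the first block of `⟨(i+1).(i−1).i.0⟩` when `i = 1`, and at the end
of that block; in the first two cases the letter two steps back is the separator `2k ≠ j − 1`,
in the last one the block is `(i+1)(i−1)(i)(0)`, which forces `i = j`. An occurrence straddling
the two copies of `t_{k,i}` would contain the final letter `2k` among its first three letters,
which are all smaller than `2k`.
-/

theorem List.infix_append_of_getLast_notMem_dropLast {α : Type*} {w u v : List α} (hu : u ≠ [])
    (hw : u.getLast hu ∉ w.dropLast) (h : w <:+: u ++ v) : w <:+: u ∨ w <:+: v := by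
  obtain h | h | ⟨l₁, l₂, hl₁, hl₂, rfl, hs, -⟩ := List.infix_append_iff_ne_nil.1 h
  · exact .inl h
  · exact .inr h
  · refine absurd ?_ hw
    rw [← hs.getLast hl₁, List.dropLast_append_of_ne_nil hl₂]
    exact List.mem_append_left _ (List.getLast_mem hl₁)

theorem List.getElem?_flatMap_range {α : Type*} {c : ℕ} {f : ℕ → List α}
    (hf : ∀ t, (f t).length = c) {m n : ℕ} (hn : n < c * m) :
    ((List.range m).flatMap f)[n]? = (f (n / c))[n % c]? := by
  induction m with
  | zero => omega
  | succ m ih =>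
    have hlen : ((List.range m).flatMap f).length = c * m := by
      simp [List.length_flatMap, hf, mul_comm]
    rw [List.range_succ, List.flatMap_append, List.getElem?_append, hlen]
    split_ifs with h
    · exact ih h
    · have hq : n / c = m := Nat.div_eq_of_lt_le (by lia) (by lia)
      rw [List.flatMap_singleton, Nat.mod_eq_sub_mul_div, hq]

def cycLetter (a b c d n : ℕ) : ℕ :=
  (if n % 4 = 0 then a else if n % 4 = 1 then b else if n % 4 = 2 then c else d) + n / 4

theorem cyc_length (k a b c d : ℕ) : (cyc k a b c d).length = 4 * (2 * k - a) := by
  simp [cyc, List.length_flatMap, mul_comm]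

theorem cyc_getElem? {k a b c d n : ℕ} (hn : n < 4 * (2 * k - a)) :
    (cyc k a b c d)[n]? = some (cycLetter a b c d n : ZMod (2 * k + 1)) := by
  rw [cyc, List.getElem?_flatMap_range (c := 4) (fun _ => rfl) hn, cycLetter]
  have : n % 4 < 4 := Nat.mod_lt _ (by norm_num)
  interval_cases n % 4 <;> simp

theorem cyc_of_lt {k a : ℕ} (b c d : ℕ) (ha : a < 2 * k) :
    cyc k a b c d = [(a : ZMod (2 * k + 1)), b, c, d] ++ cyc k (a + 1) (b + 1) (c + 1) (d + 1) := by
  rw [cyc, show 2 * k - a = 2 * k - (a + 1) + 1 by omega, List.range_succ_eq_map,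
    List.flatMap_cons, List.flatMap_map, cyc]
  simp only [Nat.add_zero, Nat.succ_eq_add_one, Nat.add_assoc, Nat.add_comm 1]

/-- For `0 < i < 2k`, the blocks of `t_{k,i}` start at positions `0`, `8k` (separator),
`8k + 1`, `16k − 4i + 1` (separator), `16k − 4i + 2` and `24k − 8i − 2` (the tail
`(2k)(2k)(2k−i)(2k)`). -/
def twordLetter (k i m : ℕ) : ℕ :=
  if m < 8 * k then cycLetter 0 0 0 0 m
  else if m = 8 * k then 2 * k
  else if m < 16 * k - 4 * i + 1 then cycLetter i 0 0 0 (m - (8 * k + 1))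
  else if m = 16 * k - 4 * i + 1 then 2 * k
  else if m < 24 * k - 8 * i - 2 then cycLetter (i + 1) (i - 1) i 0 (m - (16 * k - 4 * i + 2))
  else if m = 24 * k - 8 * i then 2 * k - i
  else 2 * k

theorem tword_length {k i : ℕ} (hi : i < 2 * k) : (tword k i).length = 24 * k - 8 * i + 2 := by
  simp only [tword, List.length_append, cyc_length, List.length_cons, List.length_nil]
  omega

theorem tword_getElem? {k i m : ℕ} (hi : i < 2 * k) (hm : m < 24 * k - 8 * i + 2) :
    (tword k i)[m]? = some (twordLetter k i m : ZMod (2 * k + 1)) := by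
  -- once the block containing `m` is fixed, every length side condition and every `if` is
  -- decided by `omega`
  rcases (show m < 8 * k ∨ m = 8 * k ∨ 8 * k < m ∧ m < 16 * k - 4 * i + 1 ∨
      m = 16 * k - 4 * i + 1 ∨ 16 * k - 4 * i + 1 < m ∧ m < 24 * k - 8 * i - 2 ∨
      24 * k - 8 * i - 2 ≤ m by omega) with h | h | h | h | h | h <;>
    simp (disch := ((try simp only [cyc_length, List.length_cons, List.length_nil]); omega)) only
      [tword, twordLetter, List.append_assoc, List.getElem?_append_left,
        List.getElem?_append_right, List.getElem?_cons, cyc_getElem?, cyc_length,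
        List.length_cons, List.length_nil, if_pos, if_neg]
  all_goals first | (congr 3; omega) | (split_ifs <;> first | rfl | omega)

theorem twordLetter_le (k i m : ℕ) : twordLetter k i m ≤ 2 * k := by
  unfold twordLetter cycLetter
  split_ifs <;> omega

theorem twordLetter_eq_of_getElem? {k i m v : ℕ} (hi : i < 2 * k) (hv : v ≤ 2 * k)
    (h : (tword k i)[m]? = some (v : ZMod (2 * k + 1))) : twordLetter k i m = v := by
  have hm : m < 24 * k - 8 * i + 2 := tword_length hi ▸ (List.getElem?_eq_some_iff.1 h).1
  rw [tword_getElem? hi hm, Option.some_inj] at h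
  exact CharP.natCast_injOn_Iio (ZMod (2 * k + 1)) (2 * k + 1)
    (Set.mem_Iio.2 (Nat.lt_succ_of_le (twordLetter_le k i m))) (Set.mem_Iio.2 (by omega)) h

theorem twordLetter_eq_zero {k i m : ℕ} (hi0 : 0 < i) (hi : i < 2 * k)
    (h : twordLetter k i m = 0) :
    m < 4 ∨ 8 * k + 2 ≤ m ∧ m ≤ 8 * k + 4 ∨ (i = 1 ∧ m = 16 * k - 1) ∨
      (i < 2 * k - 1 ∧ m = 16 * k - 4 * i + 5) := by
  unfold twordLetter cycLetter at h
  split_ifs at h <;> omega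

theorem twordLetter_succ_eq_zero {k i m : ℕ} (hi0 : 0 < i) (hi : i < 2 * k)
    (h : twordLetter k i m ≠ 0) (h' : twordLetter k i (m + 1) = 0) :
    m = 8 * k + 1 ∨ (i = 1 ∧ m = 16 * k - 2) ∨ (i < 2 * k - 1 ∧ m = 16 * k - 4 * i + 4) := by
  have hm := twordLetter_eq_zero hi0 hi h'
  unfold twordLetter cycLetter at h
  split_ifs at h <;> omega

theorem not_twordLetter_pattern {k i j n : ℕ} (hi0 : 0 < i) (hi : i < 2 * k) (hj0 : 0 < j)
    (hj : j < 2 * k - 1) (hij : i ≠ j) (h₀ : twordLetter k i n = j + 1)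
    (h₁ : twordLetter k i (n + 1) = j - 1) (h₂ : twordLetter k i (n + 2) = j)
    (h₃ : twordLetter k i (n + 3) = 0) : False := by
  rcases twordLetter_succ_eq_zero hi0 hi (by omega) h₃ with h | ⟨rfl, h⟩ | ⟨-, h⟩
  · unfold twordLetter at h₁
    split_ifs at h₁ <;> omega
  · unfold twordLetter at h₁
    split_ifs at h₁ <;> omega
  · unfold twordLetter cycLetter at h₀
    split_ifs at h₀ <;> omega

def patternWord (k j : ℕ) : List (ZMod (2 * k + 1)) :=
  [((j + 1 : ℕ) : ZMod (2 * k + 1)), ((j - 1 : ℕ) : ZMod (2 * k + 1)),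
    ((j : ℕ) : ZMod (2 * k + 1)), 0]

theorem patternWord_infix_tword {k j : ℕ} (hj : j < 2 * k - 1) :
    patternWord k j <:+: tword k j := by
  rw [patternWord, tword, cyc_of_lt (j - 1) j 0 (by omega), Nat.cast_zero]
  exact List.infix_append_of_infix_left
    (List.infix_append_of_infix_right List.infix_append_left)

theorem patternWord_not_infix_tword {k i j : ℕ} (hi0 : 0 < i) (hi : i < 2 * k) (hj0 : 0 < j)
    (hj : j < 2 * k - 1) (hij : i ≠ j) : ¬ patternWord k j <:+: tword k i := by
  rw [patternWord, List.infix_iff_getElem?]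
  rintro ⟨n, -, hn⟩
  have h₃ := hn 3 (by simp)
  rw [← Nat.cast_zero] at h₃
  exact not_twordLetter_pattern hi0 hi hj0 hj hij
    (twordLetter_eq_of_getElem? hi (by omega) (by simpa [add_comm] using hn 0 (by simp)))
    (twordLetter_eq_of_getElem? hi (by omega) (by simpa [add_comm] using hn 1 (by simp)))
    (twordLetter_eq_of_getElem? hi (by omega) (by simpa [add_comm] using hn 2 (by simp)))
    (twordLetter_eq_of_getElem? hi (by omega) (by simpa [add_comm] using h₃))

theorem getLast_tword_notMem_dropLast_patternWord {k i j : ℕ} (hj : j < 2 * k - 1)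
    (h : tword k i ≠ []) : (tword k i).getLast h ∉ (patternWord k j).dropLast := by
  have hne : ∀ a < 2 * k, ((2 * k : ℕ) : ZMod (2 * k + 1)) ≠ a := fun a ha =>
    (CharP.natCast_injOn_Iio _ _).ne (Set.mem_Iio.2 (by omega)) (Set.mem_Iio.2 (by omega))
      (by omega)
  have hlast : (tword k i).getLast h = ((2 * k : ℕ) : ZMod (2 * k + 1)) := by simp [tword]
  simp only [hlast, patternWord, List.dropLast, List.mem_cons, List.not_mem_nil, or_false,
    not_or]
  exact ⟨hne _ (by omega), hne _ (by omega), hne _ (by omega)⟩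

theorem tword_factor_distinct_general (k i j : ℕ)
    (hi0 : 0 < i) (hi : i < 2 * k) (hj0 : 0 < j) (hj : j < 2 * k - 1) (hij : i ≠ j) :
    ([((j + 1 : ℕ) : ZMod (2 * k + 1)), ((j - 1 : ℕ) : ZMod (2 * k + 1)),
        ((j : ℕ) : ZMod (2 * k + 1)), 0] <:+: tword k j) ∧
    ¬ ([((j + 1 : ℕ) : ZMod (2 * k + 1)), ((j - 1 : ℕ) : ZMod (2 * k + 1)),
        ((j : ℕ) : ZMod (2 * k + 1)), 0] <:+: (tword k i ++ tword k i)) := by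
  refine ⟨patternWord_infix_tword hj, fun h => ?_⟩
  have hne : tword k i ≠ [] := by simp [tword]
  rcases List.infix_append_of_getLast_notMem_dropLast hne
      (getLast_tword_notMem_dropLast_patternWord hj hne) h with h | h <;>
    exact patternWord_not_infix_tword hi0 hi hj0 hj hij h

/-- almost-highway traces are not sub-dynamics of one another.
For `k > 1`, `0 < i < 2k`, `0 < j < 2k−1` and `i ≠ j`, the 4-letter word
`(j+1)(j−1)(j)(0)` occurs as a consecutive factor of `t_{k,j}` but not of
`t_{k,i}·t_{k,i}`. -/
theorem tword_factor_distinct (k i j : ℕ) (hk : 1 < k)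
    (hi0 : 0 < i) (hi : i < 2 * k) (hj0 : 0 < j) (hj : j < 2 * k - 1) (hij : i ≠ j) :
    ([((j + 1 : ℕ) : ZMod (2 * k + 1)), ((j - 1 : ℕ) : ZMod (2 * k + 1)),
        ((j : ℕ) : ZMod (2 * k + 1)), 0] <:+: tword k j) ∧
    ¬ ([((j + 1 : ℕ) : ZMod (2 * k + 1)), ((j - 1 : ℕ) : ZMod (2 * k + 1)),
        ((j : ℕ) : ZMod (2 * k + 1)), 0] <:+: (tword k i ++ tword k i)) :=
  tword_factor_distinct_general k i j hi0 hi hj0 hj hij
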